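/- Let b ∈ (0,1], η > 0, and ε > 0 with ε ≤ 3b^{−2}. Let ℓ ≥ 0 be an integer; for 0 ≤ i ≤ ℓ define ε_i = 5b^{−2}·η·H(i)·ε, where H(i) = Σ_{j=1}^{i} 1/j (so H(0)=0 and ε_0=0), and assume ε_ℓ < ε. Let r_−, r_+ > 0 and let (Γ_{x,i})_{0≤i≤ℓ} and (Γ_{y,i})_{0≤i≤ℓ} be nonnegative reals satisfying: (i) for all 1 ≤ i ≤ ℓ, Γ_{x,i} ≤ (η/i)·Σ_{j=0}^{i} Γ_{x,j} and Γ_{y,i} ≤ (η/i)·Σ_{j=0}^{i} Γ_{y,j}; (ii) r_−·Γ_{y,0} ≤ Γ_{x,0} ≤ r_+·Γ_{y,0}; and (iii) for all 1 ≤ i ≤ ℓ, (1+ε)^{−2}·r_−·Γ_{y,i} ≤ Γ_{x,i} ≤ (1+ε)^{2}·r_+·Γ_{y,i}. Then (1+ε_ℓ)^{−1}·r_−·Σ_{i=0}^{ℓ} Γ_{y,i} ≤ Σ_{i=0}^{ℓ} Γ_{x,i} ≤ (1+ε_ℓ)·r_+·Σ_{i=0}^{ℓ} Γ_{y,i}.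 -/

import Mathlib

/-!
The lower bound is the upper bound with the roles of `Γx` and `Γy` exchanged and `r₋` replaced
by `r₋⁻¹`. The upper bound goes by induction on the number of terms: as `(1 + ε)² ≤ 1 + δ` with
`δ = 5 b⁻² ε`, adding the term `i = n + 1` costs at most
`δ Γ_{y,n+1} ≤ δ η / (n + 1) · Σ_{j ≤ n+1} Γ_{y,j}`, and `δ η / (n + 1)` is exactly the increment
`ε_{n+1} - ε_n`.
-/

open scoped BigOperators

/-- The `i`-th harmonic number `H(i) = Σ_{j=1}^{i} 1/j`, with `H(0) = 0`. -/
noncomputable def harm (i : ℕ) : ℝ := ∑ j ∈ Finset.range i, 1 / ((j : ℝ) + 1)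

open Finset

lemma harm_nonneg (n : ℕ) : 0 ≤ harm n :=
  sum_nonneg fun _ _ => by positivity

lemma harm_succ (n : ℕ) : harm (n + 1) = harm n + 1 / ((n : ℝ) + 1) :=
  sum_range_succ _ _

lemma inv_mul_mul_le_iff {a r x y : ℝ} (ha : 0 < a) (hr : 0 < r) :
    a⁻¹ * r * y ≤ x ↔ y ≤ a * r⁻¹ * x := by
  rw [mul_assoc, inv_mul_le_iff₀ ha, ← le_inv_mul_iff₀ hr, ← mul_assoc, mul_comm r⁻¹]

lemma one_add_sq_le_one_add_five_div_sq_mul {b ε : ℝ} (hb0 : 0 < b) (hb1 : b ≤ 1)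
    (hε0 : 0 ≤ ε) (hε3 : ε ≤ 3 / b ^ 2) : (1 + ε) ^ 2 ≤ 1 + 5 / b ^ 2 * ε := by
  have hb2 : 2 ≤ 2 / b ^ 2 := by
    rw [le_div_iff₀ (by positivity)]
    nlinarith
  have h5 : 2 + ε ≤ 5 / b ^ 2 := by linarith [show 5 / b ^ 2 = 3 / b ^ 2 + 2 / b ^ 2 by ring]
  nlinarith

lemma add_one_add_mul_le_one_add_mul_add {δ η h m T B : ℝ} (hδ : 0 ≤ δ) (hη : 0 ≤ η)
    (hh : 0 ≤ h) (hB : 0 ≤ B) (hBT : B ≤ η / m * (T + B)) :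
    (1 + δ * η * h) * T + (1 + δ) * B ≤ (1 + δ * η * (h + 1 / m)) * (T + B) := by
  have hδηhB : 0 ≤ δ * η * h * B := by positivity
  linear_combination δ * hBT + hδηhB

theorem sum_range_le_one_add_harm_mul_sum_range {η δ r : ℝ} (hη : 0 ≤ η) (hδ : 0 ≤ δ)
    (hr : 0 ≤ r) {ℓ : ℕ} {A B : ℕ → ℝ} (hB : ∀ i ≤ ℓ, 0 ≤ B i)
    (hBov : ∀ i : ℕ, 1 ≤ i → i ≤ ℓ → B i ≤ η / (i : ℝ) * ∑ j ∈ range (i + 1), B j)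
    (hA0 : A 0 ≤ r * B 0) (hA : ∀ i : ℕ, 1 ≤ i → i ≤ ℓ → A i ≤ (1 + δ) * r * B i) :
    ∀ n ≤ ℓ, ∑ i ∈ range (n + 1), A i ≤ (1 + δ * η * harm n) * r * ∑ i ∈ range (n + 1), B i := by
  intro n
  induction n with
  | zero =>
    intro _
    simpa [harm] using hA0
  | succ n ih =>
    intro hn
    have hT : 0 ≤ ∑ i ∈ range (n + 1), B i :=
      sum_nonneg fun i hi => hB i (by have := mem_range.1 hi; omega)
    have hBT := hBov (n + 1) (by omega) hn
    rw [sum_range_succ B (n + 1)] at hBT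
    push_cast at hBT
    have step := add_one_add_mul_le_one_add_mul_add hδ hη (harm_nonneg n) (hB _ hn) hBT
    rw [sum_range_succ, sum_range_succ B, harm_succ]
    calc ∑ i ∈ range (n + 1), A i + A (n + 1)
        ≤ (1 + δ * η * harm n) * r * ∑ i ∈ range (n + 1), B i + (1 + δ) * r * B (n + 1) :=
          add_le_add (ih (by omega)) (hA _ (by omega) hn)
      _ = ((1 + δ * η * harm n) * ∑ i ∈ range (n + 1), B i + (1 + δ) * B (n + 1)) * r := by ring
      _ ≤ ((1 + δ * η * (harm n + 1 / ((n : ℝ) + 1))) *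
            (∑ i ∈ range (n + 1), B i + B (n + 1))) * r := by gcongr
      _ = _ := by ring

theorem lp_soundness_arithmetic_general
    (b η ε : ℝ) (hb0 : 0 < b) (hb1 : b ≤ 1) (hη : 0 < η) (hε0 : 0 < ε)
    (hε3 : ε ≤ 3 / b ^ 2) (ℓ : ℕ)
    (rlo rhi : ℝ) (hrlo : 0 < rlo) (hrhi : 0 < rhi)
    (Γx Γy : ℕ → ℝ)
    (hxnn : ∀ i ≤ ℓ, 0 ≤ Γx i) (hynn : ∀ i ≤ ℓ, 0 ≤ Γy i)
    (hxov : ∀ i : ℕ, 1 ≤ i → i ≤ ℓ →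
      Γx i ≤ η / (i : ℝ) * ∑ j ∈ Finset.range (i + 1), Γx j)
    (hyov : ∀ i : ℕ, 1 ≤ i → i ≤ ℓ →
      Γy i ≤ η / (i : ℝ) * ∑ j ∈ Finset.range (i + 1), Γy j)
    (h0l : rlo * Γy 0 ≤ Γx 0) (h0u : Γx 0 ≤ rhi * Γy 0)
    (hil : ∀ i : ℕ, 1 ≤ i → i ≤ ℓ → ((1 + ε) ^ 2)⁻¹ * rlo * Γy i ≤ Γx i)
    (hiu : ∀ i : ℕ, 1 ≤ i → i ≤ ℓ → Γx i ≤ (1 + ε) ^ 2 * rhi * Γy i) :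
    (1 + 5 / b ^ 2 * η * harm ℓ * ε)⁻¹ * rlo * ∑ i ∈ Finset.range (ℓ + 1), Γy i
        ≤ ∑ i ∈ Finset.range (ℓ + 1), Γx i ∧
      ∑ i ∈ Finset.range (ℓ + 1), Γx i
        ≤ (1 + 5 / b ^ 2 * η * harm ℓ * ε) * rhi * ∑ i ∈ Finset.range (ℓ + 1), Γy i := by
  set δ := 5 / b ^ 2 * ε
  have hδ : 0 ≤ δ := by positivity
  have hslack : (1 + ε) ^ 2 ≤ 1 + δ :=
    one_add_sq_le_one_add_five_div_sq_mul hb0 hb1 hε0.le hε3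
  have hεℓ : 5 / b ^ 2 * η * harm ℓ * ε = δ * η * harm ℓ := by ring
  have hE : 0 < 1 + δ * η * harm ℓ := by have := harm_nonneg ℓ; positivity
  rw [hεℓ]
  constructor
  · rw [inv_mul_mul_le_iff hE hrlo]
    refine sum_range_le_one_add_harm_mul_sum_range hη.le hδ (inv_pos.2 hrlo).le hxnn hxov
      ((le_inv_mul_iff₀ hrlo).2 h0l) (fun i h1 h2 => ?_) ℓ le_rfl
    refine ((inv_mul_mul_le_iff (by positivity) hrlo).1 (hil i h1 h2)).trans ?_
    have := hxnn i h2
    gcongr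
  · refine sum_range_le_one_add_harm_mul_sum_range hη.le hδ hrhi.le hynn hyov h0u
      (fun i h1 h2 => (hiu i h1 h2).trans ?_) ℓ le_rfl
    have := hynn i h2
    gcongr

/-- arithmetic core of the LP soundness analysis. -/
theorem lp_soundness_arithmetic
    (b η ε : ℝ) (hb0 : 0 < b) (hb1 : b ≤ 1) (hη : 0 < η) (hε0 : 0 < ε)
    (hε3 : ε ≤ 3 / b ^ 2) (ℓ : ℕ)
    (hεℓ : 5 / b ^ 2 * η * harm ℓ * ε < ε)
    (rlo rhi : ℝ) (hrlo : 0 < rlo) (hrhi : 0 < rhi)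
    (Γx Γy : ℕ → ℝ)
    (hxnn : ∀ i ≤ ℓ, 0 ≤ Γx i) (hynn : ∀ i ≤ ℓ, 0 ≤ Γy i)
    (hxov : ∀ i : ℕ, 1 ≤ i → i ≤ ℓ →
      Γx i ≤ η / (i : ℝ) * ∑ j ∈ Finset.range (i + 1), Γx j)
    (hyov : ∀ i : ℕ, 1 ≤ i → i ≤ ℓ →
      Γy i ≤ η / (i : ℝ) * ∑ j ∈ Finset.range (i + 1), Γy j)
    (h0l : rlo * Γy 0 ≤ Γx 0) (h0u : Γx 0 ≤ rhi * Γy 0)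
    (hil : ∀ i : ℕ, 1 ≤ i → i ≤ ℓ → ((1 + ε) ^ 2)⁻¹ * rlo * Γy i ≤ Γx i)
    (hiu : ∀ i : ℕ, 1 ≤ i → i ≤ ℓ → Γx i ≤ (1 + ε) ^ 2 * rhi * Γy i) :
    (1 + 5 / b ^ 2 * η * harm ℓ * ε)⁻¹ * rlo * ∑ i ∈ Finset.range (ℓ + 1), Γy i
        ≤ ∑ i ∈ Finset.range (ℓ + 1), Γx i ∧
      ∑ i ∈ Finset.range (ℓ + 1), Γx i
        ≤ (1 + 5 / b ^ 2 * η * harm ℓ * ε) * rhi * ∑ i ∈ Finset.range (ℓ + 1), Γy i :=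
  lp_soundness_arithmetic_general b η ε hb0 hb1 hη hε0 hε3 ℓ rlo rhi hrlo hrhi Γx Γy hxnn hynn hxov
    hyov h0l h0u hil hiu
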